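/- arXiv:1911.05206 — 3 statements merged into one kernel-verified Lean document; each statement's English description precedes it below -/
import Mathlib

section
/- Let Ψ : ℝⁿ → ℝⁿ be a bijection whose inverse Ψ⁻¹ is a contraction with factor 1/ρ < 1. Fix ε > 0 and δ = (1 − 1/ρ)ε. Let (yₖ)_{k∈ℤ} be a bi-infinite δ-pseudo-orbit of Ψ. Define Z as the set of bi-infinite sequences z with sup_{k∈ℤ} ‖zₖ − yₖ‖ ≤ ε, equipped with the supremum metric, and define T : Z → Z by (Tz)ₖ = Ψ⁻¹(z_{k+1}). Then T maps Z into Z and is a contraction on Z with factor 1/ρ; consequently T has a unique fixed point x ∈ Z, which is an orbit of Ψ ε-shadowing (yₖ). -/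
/-- Expansion map shadowing via the Banach fixed point argument: for a bijection Ψ
whose inverse Φ is a 1/ρ-contraction and a bi-infinite δ-pseudo-orbit y with
δ = (1 - 1/ρ)ε, the operator (Tz)ₖ = Φ(z_{k+1}) maps the ε-tube around y into
itself, is a 1/ρ-contraction there, and has a unique fixed point: an orbit of Ψ
ε-shadowing y. -/
theorem expansion_map_shadowing_banach {n : ℕ}
    (Ψ Φ : EuclideanSpace ℝ (Fin n) → EuclideanSpace ℝ (Fin n))
    (hinv₁ : Function.LeftInverse Φ Ψ) (hinv₂ : Function.RightInverse Φ Ψ)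
    (ρ : ℝ) (hρ : 1 < ρ)
    (hcontr : ∀ x y, ‖Φ x - Φ y‖ ≤ (1 / ρ) * ‖x - y‖)
    (ε δ : ℝ) (hε : 0 < ε) (hδ : δ = (1 - 1 / ρ) * ε)
    (y : ℤ → EuclideanSpace ℝ (Fin n))
    (hpo : ∀ k : ℤ, ‖y (k + 1) - Ψ (y k)‖ ≤ δ) :
    (∀ z : ℤ → EuclideanSpace ℝ (Fin n), (∀ k, ‖z k - y k‖ ≤ ε) →
      ∀ k, ‖Φ (z (k + 1)) - y k‖ ≤ ε) ∧
    (∀ z w : ℤ → EuclideanSpace ℝ (Fin n), (∀ k, ‖z k - y k‖ ≤ ε) →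
      (∀ k, ‖w k - y k‖ ≤ ε) → ∀ C : ℝ, (∀ k, ‖z k - w k‖ ≤ C) →
      ∀ k, ‖Φ (z (k + 1)) - Φ (w (k + 1))‖ ≤ (1 / ρ) * C) ∧
    (∃! x : ℤ → EuclideanSpace ℝ (Fin n),
      (∀ k, ‖x k - y k‖ ≤ ε) ∧ ∀ k, x (k + 1) = Ψ (x k)) := by
  set a : ℝ := 1 / ρ with ha
  have ha0 : 0 < a := by positivity
  have ha1 : a < 1 := by
    rw [ha, div_lt_one (by linarith)]; linarith
  -- Part 1
  have H1 : ∀ z : ℤ → EuclideanSpace ℝ (Fin n), (∀ k, ‖z k - y k‖ ≤ ε) →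
      ∀ k, ‖Φ (z (k + 1)) - y k‖ ≤ ε := by
    intro z hz k
    have h1 : ‖Φ (z (k + 1)) - y k‖ = ‖Φ (z (k + 1)) - Φ (Ψ (y k))‖ := by
      rw [hinv₁ (y k)]
    have h2 : ‖Φ (z (k + 1)) - Φ (Ψ (y k))‖ ≤ a * ‖z (k + 1) - Ψ (y k)‖ :=
      hcontr _ _
    have h3 : ‖z (k + 1) - Ψ (y k)‖ ≤ ‖z (k + 1) - y (k + 1)‖ + ‖y (k + 1) - Ψ (y k)‖ := by
      have := norm_sub_le_norm_sub_add_norm_sub (z (k + 1)) (y (k + 1)) (Ψ (y k))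
      linarith [this]
    have h4 : ‖z (k + 1) - Ψ (y k)‖ ≤ ε + δ := by
      have := hz (k + 1); have := hpo k; linarith
    have h5 : ‖Φ (z (k + 1)) - y k‖ ≤ a * (ε + δ) := by
      rw [h1]
      calc ‖Φ (z (k + 1)) - Φ (Ψ (y k))‖ ≤ a * ‖z (k + 1) - Ψ (y k)‖ := h2
        _ ≤ a * (ε + δ) := by nlinarith
    have : a * (ε + δ) ≤ ε := by
      rw [hδ]; nlinarith [sq_nonneg (1 - a)]
    linarith
  -- Part 2
  have H2 : ∀ z w : ℤ → EuclideanSpace ℝ (Fin n), (∀ k, ‖z k - y k‖ ≤ ε) →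
      (∀ k, ‖w k - y k‖ ≤ ε) → ∀ C : ℝ, (∀ k, ‖z k - w k‖ ≤ C) →
      ∀ k, ‖Φ (z (k + 1)) - Φ (w (k + 1))‖ ≤ a * C := by
    intro z w _ _ C hC k
    calc ‖Φ (z (k + 1)) - Φ (w (k + 1))‖ ≤ a * ‖z (k + 1) - w (k + 1)‖ := hcontr _ _
      _ ≤ a * C := by nlinarith [hC (k + 1)]
  refine ⟨H1, H2, ?_⟩
  -- Φ is continuous
  have hΦcont : Continuous Φ := by
    have : LipschitzWith (Real.toNNReal a) Φ := by
      apply LipschitzWith.of_dist_le_mul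
      intro p q
      rw [dist_eq_norm, dist_eq_norm, Real.coe_toNNReal a ha0.le]
      exact hcontr p q
    exact this.continuous
  -- iteration
  set g : ℕ → ℤ → EuclideanSpace ℝ (Fin n) :=
    fun m => Nat.rec y (fun _ p => fun k => Φ (p (k + 1))) m with hg
  have hg0 : g 0 = y := rfl
  have hgsucc : ∀ m k, g (m + 1) k = Φ (g m (k + 1)) := fun m k => rfl
  -- g stays in the tube
  have hA : ∀ m k, ‖g m k - y k‖ ≤ ε := by
    intro m
    induction m with
    | zero => intro k; simp [hg0]; positivity
    | succ m ih =>
      intro k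
      rw [hgsucc]
      exact H1 (g m) ih k
  -- consecutive distances
  have hB : ∀ m k, ‖g (m + 1) k - g m k‖ ≤ a ^ m * ε := by
    intro m
    induction m with
    | zero =>
      intro k
      rw [pow_zero, one_mul, hgsucc 0 k, hg0]
      exact H1 y (fun j => by simpa using hε.le) k
    | succ m ih =>
      intro k
      rw [hgsucc (m + 1) k, hgsucc m k]
      calc ‖Φ (g (m + 1) (k + 1)) - Φ (g m (k + 1))‖
          ≤ a * ‖g (m + 1) (k + 1) - g m (k + 1)‖ := hcontr _ _
        _ ≤ a * (a ^ m * ε) := by nlinarith [ih (k + 1)]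
        _ = a ^ (m + 1) * ε := by ring
  -- limits
  have hcauchy : ∀ k, ∃ L, Filter.Tendsto (fun m => g m k) Filter.atTop (nhds L) := by
    intro k
    apply cauchySeq_tendsto_of_complete
    apply cauchySeq_of_le_geometric a ε ha1
    intro m
    rw [dist_eq_norm, norm_sub_rev, mul_comm]
    exact hB m k
  choose x hx using hcauchy
  have hxtube : ∀ k, ‖x k - y k‖ ≤ ε := by
    intro k
    have : Filter.Tendsto (fun m => ‖g m k - y k‖) Filter.atTop (nhds ‖x k - y k‖) :=
      ((hx k).sub_const (y k)).norm
    exact le_of_tendsto this (Filter.Eventually.of_forall (fun m => hA m k))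
  have hxfix : ∀ k, x k = Φ (x (k + 1)) := by
    intro k
    have h1 : Filter.Tendsto (fun m => g (m + 1) k) Filter.atTop (nhds (x k)) :=
      (hx k).comp (Filter.tendsto_add_atTop_nat 1)
    have h2 : Filter.Tendsto (fun m => Φ (g m (k + 1))) Filter.atTop (nhds (Φ (x (k + 1)))) :=
      (hΦcont.tendsto _).comp (hx (k + 1))
    have h3 : (fun m => g (m + 1) k) = fun m => Φ (g m (k + 1)) := by
      funext m; exact hgsucc m k
    rw [h3] at h1
    exact tendsto_nhds_unique h1 h2
  refine ⟨x, ⟨hxtube, fun k => ?_⟩, ?_⟩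
  · rw [hxfix k, hinv₂ (x (k + 1))]
  · -- uniqueness
    rintro x' ⟨hx'tube, hx'orb⟩
    have hx'fix : ∀ k, x' k = Φ (x' (k + 1)) := by
      intro k
      have := congrArg Φ (hx'orb k)
      rw [hinv₁ (x' k)] at this
      exact this.symm
    have key : ∀ m k, ‖x' k - x k‖ ≤ a ^ m * (2 * ε) := by
      intro m
      induction m with
      | zero =>
        intro k
        have h := norm_sub_le_norm_sub_add_norm_sub (x' k) (y k) (x k)
        have := hx'tube k
        have h2 : ‖y k - x k‖ ≤ ε := by rw [norm_sub_rev]; exact hxtube k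
        simpa using by linarith
      | succ m ih =>
        intro k
        rw [hx'fix k, hxfix k]
        calc ‖Φ (x' (k + 1)) - Φ (x (k + 1))‖ ≤ a * ‖x' (k + 1) - x (k + 1)‖ := hcontr _ _
          _ ≤ a * (a ^ m * (2 * ε)) := by nlinarith [ih (k + 1)]
          _ = a ^ (m + 1) * (2 * ε) := by ring
    funext k
    have hlim : Filter.Tendsto (fun m : ℕ => a ^ m * (2 * ε)) Filter.atTop (nhds 0) := by
      simpa using (tendsto_pow_atTop_nhds_zero_of_lt_one ha0.le ha1).mul_const (2 * ε)
    have : ‖x' k - x k‖ ≤ 0 :=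
      le_of_tendsto_of_tendsto' tendsto_const_nhds hlim (fun m => key m k)
    have := norm_le_zero_iff.mp this
    exact sub_eq_zero.mp this
end

section
/- Let f : ℝᵈ → ℝ be C², μ-strongly-convex and L-smooth, with gradient-flow trajectory y(t) satisfying ‖∇f(y(t))‖ ≤ ℓ for all t ≥ 0. Let ε > 0 and choose 0 < h ≤ min{2με/(Lℓ), 1/L}. Then the sampled flow yₖ = y(kh) is ε-shadowed by any gradient descent orbit x_{k+1} = xₖ − h∇f(xₖ) started at any x₀ with ‖x₀ − y₀‖ ≤ ε: ‖xₖ − yₖ‖ ≤ ε for all k ∈ ℕ. -/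
/-!
The sampled flow `y (k h)` is a pseudo-orbit of the gradient-descent map `G x = x - h ∇f x`:
since the flow moves at speed at most `ℓ` and `∇f` is `L`-Lipschitz, one explicit Euler step
from `y (k h)` misses `y ((k + 1) h)` by at most `L ℓ h² / 2`. The derivative `1 - h ∇²f` of `G`
is self-adjoint with Rayleigh quotients in `[1 - h L, 1 - h μ] ⊆ [0, 1 - h μ]`, so `G` is a
`(1 - h μ)`-contraction once `h ≤ 1 / L`. A `ρ`-contraction keeps every orbit within `ε` of a
`δ`-pseudo-orbit that it starts `ε`-close to, as soon as `δ ≤ (1 - ρ) ε`, and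
`h ≤ 2 μ ε / (L ℓ)` says exactly that `L ℓ h² / 2 ≤ h μ ε`.
-/

open InnerProductSpace Set
open scoped RealInnerProductSpace

section Shadowing

variable {X : Type*} [PseudoMetricSpace X]

theorem dist_le_of_contraction_of_pseudoOrbit {T : X → X} {ρ δ ε : ℝ} (hρ : 0 ≤ ρ)
    (hT : ∀ p q, dist (T p) (T q) ≤ ρ * dist p q) (hδ : δ ≤ (1 - ρ) * ε)
    {x y : ℕ → X} (hx : ∀ k, x (k + 1) = T (x k)) (hy : ∀ k, dist (T (y k)) (y (k + 1)) ≤ δ)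
    (h0 : dist (x 0) (y 0) ≤ ε) (k : ℕ) : dist (x k) (y k) ≤ ε := by
  induction k with
  | zero => exact h0
  | succ k ih =>
    calc dist (x (k + 1)) (y (k + 1))
        ≤ dist (T (x k)) (T (y k)) + dist (T (y k)) (y (k + 1)) := by
          rw [hx]; exact dist_triangle _ _ _
      _ ≤ ρ * ε + δ := add_le_add ((hT _ _).trans (mul_le_mul_of_nonneg_left ih hρ)) (hy k)
      _ ≤ ε := by linarith

end Shadowing

namespace ContinuousLinearMap

variable {E : Type*} [NormedAddCommGroup E] [InnerProductSpace ℝ E]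

theorem le_opNorm_of_mul_norm_sq_le_inner [Nontrivial E] {A : E →L[ℝ] E} {μ : ℝ}
    (hA : ∀ v, μ * ‖v‖ ^ 2 ≤ ⟪v, A v⟫) : μ ≤ ‖A‖ := by
  obtain ⟨v, hv⟩ := exists_ne (0 : E)
  refine le_of_mul_le_mul_right ?_ (by positivity : 0 < ‖v‖ ^ 2)
  calc μ * ‖v‖ ^ 2 ≤ ⟪v, A v⟫ := hA v
    _ ≤ ‖v‖ * ‖A v‖ := real_inner_le_norm _ _
    _ ≤ ‖v‖ * (‖A‖ * ‖v‖) := by gcongr; exact A.le_opNorm v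
    _ = ‖A‖ * ‖v‖ ^ 2 := by ring

theorem opNorm_le_of_isSymmetric_of_abs_inner_le {T : E →L[ℝ] E}
    (hT : (T : E →ₗ[ℝ] E).IsSymmetric) {c : ℝ} (hc : 0 ≤ c)
    (hTc : ∀ v, |⟪T v, v⟫| ≤ c * ‖v‖ ^ 2) : ‖T‖ ≤ c := by
  rw [T.norm_eq_iSup_rayleighQuotient hT]
  refine ciSup_le fun v => ?_
  rcases eq_or_ne v 0 with rfl | hv
  · simpa using hc
  · rw [rayleighQuotient, reApplyInnerSelf_apply, abs_div, abs_sq, div_le_iff₀ (by positivity)]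
    exact hTc v

theorem norm_one_sub_smul_le [Nontrivial E] {A : E →L[ℝ] E} (hA : (A : E →ₗ[ℝ] E).IsSymmetric)
    {μ L h : ℝ} (hμ : ∀ v, μ * ‖v‖ ^ 2 ≤ ⟪v, A v⟫) (hL : ‖A‖ ≤ L) (hh : 0 ≤ h) (hhL : h * L ≤ 1) :
    ‖(1 : E →L[ℝ] E) - h • A‖ ≤ 1 - h * μ := by
  have hμL : h * μ ≤ h * L :=
    mul_le_mul_of_nonneg_left ((le_opNorm_of_mul_norm_sq_le_inner hμ).trans hL) hh
  have hsymm : ((1 - h • A : E →L[ℝ] E) : E →ₗ[ℝ] E).IsSymmetric :=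
    LinearMap.IsSymmetric.one.sub (hA.smul (conj_trivial h))
  refine opNorm_le_of_isSymmetric_of_abs_inner_le hsymm (by linarith) fun v => ?_
  have hupper : ⟪A v, v⟫ ≤ L * ‖v‖ ^ 2 :=
    calc ⟪A v, v⟫ ≤ ‖A v‖ * ‖v‖ := real_inner_le_norm _ _
      _ ≤ ‖A‖ * ‖v‖ * ‖v‖ := by gcongr; exact A.le_opNorm v
      _ ≤ L * ‖v‖ ^ 2 := by rw [mul_assoc, ← sq]; gcongr
  have hlower : μ * ‖v‖ ^ 2 ≤ ⟪A v, v⟫ := real_inner_comm v (A v) ▸ hμ v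
  have hTv : ⟪((1 : E →L[ℝ] E) - h • A) v, v⟫ = ‖v‖ ^ 2 - h * ⟪A v, v⟫ := by
    simp [inner_sub_left, inner_smul_left]
  rw [hTv, abs_le]
  constructor <;> nlinarith [sq_nonneg ‖v‖, mul_le_mul_of_nonneg_left hupper hh,
    mul_le_mul_of_nonneg_left hlower hh]

end ContinuousLinearMap

section Euler

variable {E : Type*} [NormedAddCommGroup E] [NormedSpace ℝ E]

theorem norm_sub_eulerStep_le {F : E → E} {y : ℝ → E} {L ℓ t₀ t₁ : ℝ} (hL : 0 ≤ L)
    (hF : ∀ p q, ‖F p - F q‖ ≤ L * ‖p - q‖) (hy : ∀ t ∈ Icc t₀ t₁, HasDerivAt y (F (y t)) t)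
    (hℓ : ∀ t ∈ Icc t₀ t₁, ‖F (y t)‖ ≤ ℓ) :
    ∀ t ∈ Icc t₀ t₁, ‖y t - (y t₀ + (t - t₀) • F (y t₀))‖ ≤ L * ℓ / 2 * (t - t₀) ^ 2 := by
  have hspeed : ∀ t ∈ Icc t₀ t₁, ‖y t - y t₀‖ ≤ ℓ * (t - t₀) :=
    norm_image_sub_le_of_norm_deriv_le_segment' (fun t ht => (hy t ht).hasDerivWithinAt)
      (fun t ht => hℓ t (Ico_subset_Icc_self ht))
  have herr : ∀ t ∈ Icc t₀ t₁,
      HasDerivAt (fun t => y t - (y t₀ + (t - t₀) • F (y t₀))) (F (y t) - F (y t₀)) t := by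
    intro t ht
    exact ((hy t ht).sub ((((hasDerivAt_id t).sub_const t₀).smul_const
      (F (y t₀))).const_add (y t₀))).congr_deriv (by rw [one_smul])
  refine image_norm_le_of_norm_deriv_right_le_deriv_boundary
    (B' := fun t => L * ℓ * (t - t₀)) (fun t ht => (herr t ht).continuousAt.continuousWithinAt)
    (fun t ht => (herr t (Ico_subset_Icc_self ht)).hasDerivWithinAt) (by simp) (fun t => ?_)
    (fun t ht => ?_)
  · exact ((((hasDerivAt_id' t).sub_const t₀).pow 2).const_mul (L * ℓ / 2)).congr_deriv
      (by norm_num; ring)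
  · calc ‖F (y t) - F (y t₀)‖ ≤ L * ‖y t - y t₀‖ := hF _ _
      _ ≤ L * (ℓ * (t - t₀)) := mul_le_mul_of_nonneg_left (hspeed t (Ico_subset_Icc_self ht)) hL
      _ = L * ℓ * (t - t₀) := by ring

end Euler

section Gradient

variable {E : Type*} [NormedAddCommGroup E] [InnerProductSpace ℝ E] [CompleteSpace E]
  {f : E → ℝ}

theorem ContDiff.gradient {n m : WithTop ℕ∞} (hf : ContDiff ℝ n f) (hmn : m + 1 ≤ n) :
    ContDiff ℝ m (gradient f) :=
  (toDual ℝ E).symm.contDiff.comp (hf.fderiv_right hmn)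

theorem inner_fderiv_gradient_apply (a u v : E) :
    ⟪fderiv ℝ (gradient f) a u, v⟫ = fderiv ℝ (fderiv ℝ f) a u v := by
  change ⟪fderiv ℝ ((toDual ℝ E).symm ∘ fderiv ℝ f) a u, v⟫ = _
  rw [LinearIsometryEquiv.comp_fderiv]
  exact toDual_symm_apply

theorem isSymmetric_fderiv_gradient {a : E} (hf : ContDiffAt ℝ 2 f a) :
    (fderiv ℝ (gradient f) a : E →ₗ[ℝ] E).IsSymmetric := fun u v => by
  rw [ContinuousLinearMap.coe_coe, inner_fderiv_gradient_apply, real_inner_comm,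
    inner_fderiv_gradient_apply, hf.isSymmSndFDerivAt minSmoothness_of_isRCLikeNormedField.le]

noncomputable def gradientStep (f : E → ℝ) (h : ℝ) (x : E) : E := x - h • gradient f x

theorem norm_gradientStep_sub_le [Nontrivial E] {L μ h : ℝ} (hf : ContDiff ℝ 2 f)
    (hsc : ∀ a v, μ * ‖v‖ ^ 2 ≤ ⟪v, fderiv ℝ (gradient f) a v⟫)
    (hL : ∀ a, ‖fderiv ℝ (gradient f) a‖ ≤ L) (hh : 0 ≤ h) (hhL : h * L ≤ 1) (p q : E) :
    ‖gradientStep f h p - gradientStep f h q‖ ≤ (1 - h * μ) * ‖p - q‖ := by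
  have hgrad : Differentiable ℝ (gradient f) :=
    (hf.gradient (by norm_num)).differentiable one_ne_zero
  refine Convex.norm_image_sub_le_of_norm_hasFDerivWithin_le (s := univ)
    (f' := fun a => 1 - h • fderiv ℝ (gradient f) a) (fun a _ => ?_) (fun a _ => ?_)
    convex_univ (mem_univ q) (mem_univ p)
  · exact ((hasFDerivAt_id a).sub ((hgrad a).hasFDerivAt.const_smul h)).hasFDerivWithinAt
  · exact ContinuousLinearMap.norm_one_sub_smul_le (isSymmetric_fderiv_gradient hf.contDiffAt)
      (hsc a) (hL a) hh hhL

theorem norm_gradientFlow_sub_gradientStep_le {y : ℝ → E} {L ℓ t₀ h : ℝ}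
    (hgrad : Differentiable ℝ (gradient f)) (hL : ∀ a, ‖fderiv ℝ (gradient f) a‖ ≤ L)
    (hh : 0 ≤ h) (hflow : ∀ t ∈ Icc t₀ (t₀ + h), HasDerivAt y (-gradient f (y t)) t)
    (hℓ : ∀ t ∈ Icc t₀ (t₀ + h), ‖gradient f (y t)‖ ≤ ℓ) :
    ‖y (t₀ + h) - gradientStep f h (y t₀)‖ ≤ L * ℓ / 2 * h ^ 2 := by
  have hlip : ∀ p q, ‖-gradient f p - -gradient f q‖ ≤ L * ‖p - q‖ := fun p q => by
    rw [neg_sub_neg, norm_sub_rev]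
    exact Convex.norm_image_sub_le_of_norm_fderiv_le (fun z _ => hgrad z) (fun z _ => hL z)
      convex_univ (mem_univ q) (mem_univ p)
  have := norm_sub_eulerStep_le ((norm_nonneg _).trans (hL 0)) hlip hflow
    (fun t ht => by simpa using hℓ t ht) (t₀ + h) ⟨by linarith, le_rfl⟩
  simpa [gradientStep, sub_eq_add_neg] using this

end Gradient

theorem gradient_descent_shadowing_strongly_convex_general {d : ℕ}
    (f : EuclideanSpace ℝ (Fin d) → ℝ) (L μ ℓ ε h : ℝ)
    (hf : ContDiff ℝ 2 f)
    (hsc : ∀ a v, μ * ‖v‖ ^ 2 ≤ inner ℝ v (fderiv ℝ (gradient f) a v))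
    (hL : ∀ a, ‖fderiv ℝ (gradient f) a‖ ≤ L)
    (hLpos : 0 < L) (hℓpos : 0 < ℓ) (hε : 0 < ε)
    (y : ℝ → EuclideanSpace ℝ (Fin d))
    (hflow : ∀ t : ℝ, HasDerivAt y (-gradient f (y t)) t)
    (hℓ : ∀ t : ℝ, 0 ≤ t → ‖gradient f (y t)‖ ≤ ℓ)
    (hh : 0 < h) (hhbound : h ≤ min (2 * μ * ε / (L * ℓ)) (1 / L))
    (x : ℕ → EuclideanSpace ℝ (Fin d))
    (hx0 : ‖x 0 - y 0‖ ≤ ε)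
    (hgd : ∀ k : ℕ, x (k + 1) = x k - h • gradient f (x k)) :
    ∀ k : ℕ, ‖x k - y ((k : ℝ) * h)‖ ≤ ε := by
  rcases subsingleton_or_nontrivial (EuclideanSpace ℝ (Fin d)) with hE | hE
  · intro k
    simpa [Subsingleton.elim (x k) (y (k * h))] using hε.le
  have hhL : h * L ≤ 1 := (le_div_iff₀ hLpos).1 (hhbound.trans (min_le_right _ _))
  have hhε : h * (L * ℓ) ≤ 2 * μ * ε :=
    (le_div_iff₀ (by positivity)).1 (hhbound.trans (min_le_left _ _))
  have hμL : μ ≤ L :=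
    (ContinuousLinearMap.le_opNorm_of_mul_norm_sq_le_inner (hsc 0)).trans (hL 0)
  have hρ : 0 ≤ 1 - h * μ := by nlinarith
  have hδ : L * ℓ / 2 * h ^ 2 ≤ (1 - (1 - h * μ)) * ε := by nlinarith
  have hcontract (p q) : dist (gradientStep f h p) (gradientStep f h q) ≤ (1 - h * μ) * dist p q :=
    by simpa only [dist_eq_norm] using norm_gradientStep_sub_le hf hsc hL hh.le hhL p q
  have hgrad : Differentiable ℝ (gradient f) :=
    (hf.gradient (by norm_num)).differentiable one_ne_zero
  have hpseudo (k : ℕ) :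
      dist (gradientStep f h (y (k * h))) (y ((k + 1 : ℕ) * h)) ≤ L * ℓ / 2 * h ^ 2 := by
    rw [dist_comm, dist_eq_norm, Nat.cast_succ, add_one_mul]
    exact norm_gradientFlow_sub_gradientStep_le hgrad hL hh.le (fun t _ => hflow t)
      (fun t ht => hℓ t ((by positivity : (0 : ℝ) ≤ k * h).trans ht.1))
  intro k
  simpa only [dist_eq_norm] using dist_le_of_contraction_of_pseudoOrbit hρ hcontract hδ hgd
    hpseudo (by simpa only [dist_eq_norm, Nat.cast_zero, zero_mul] using hx0) k

/-- Shadowing under strong convexity: for 0 < h ≤ min{2με/(Lℓ), 1/L}, the sampled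
gradient flow is ε-shadowed by any gradient descent orbit started ε-close to y₀. -/
theorem gradient_descent_shadowing_strongly_convex {d : ℕ}
    (f : EuclideanSpace ℝ (Fin d) → ℝ) (L μ ℓ ε h : ℝ)
    (hf : ContDiff ℝ 2 f)
    (hsc : ∀ a v, μ * ‖v‖ ^ 2 ≤ inner ℝ v (fderiv ℝ (gradient f) a v))
    (hL : ∀ a, ‖fderiv ℝ (gradient f) a‖ ≤ L)
    (hμ : 0 < μ) (hLpos : 0 < L) (hℓpos : 0 < ℓ) (hε : 0 < ε)
    (y : ℝ → EuclideanSpace ℝ (Fin d))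
    (hflow : ∀ t : ℝ, HasDerivAt y (-gradient f (y t)) t)
    (hℓ : ∀ t : ℝ, 0 ≤ t → ‖gradient f (y t)‖ ≤ ℓ)
    (hh : 0 < h) (hhbound : h ≤ min (2 * μ * ε / (L * ℓ)) (1 / L))
    (x : ℕ → EuclideanSpace ℝ (Fin d))
    (hx0 : ‖x 0 - y 0‖ ≤ ε)
    (hgd : ∀ k : ℕ, x (k + 1) = x k - h • gradient f (x k)) :
    ∀ k : ℕ, ‖x k - y ((k : ℝ) * h)‖ ≤ ε :=
  gradient_descent_shadowing_strongly_convex_general f L μ ℓ ε h hf hsc hL hLpos hℓpos hε y hflow hℓ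
    hh hhbound x hx0 hgd
end

section
/- Let f : ℝᵈ → ℝ be a quadratic centered at x* with symmetric Hessian H having no eigenvalue in the interval (−γ, μ) for some μ, γ > 0, and ‖H‖ ≤ L. Suppose the gradient flow orbit yₖ = y(kh) has gradients bounded by ℓ up to iteration K. Let ε > 0 and 0 < h ≤ min{με/(Lℓ), γε/(2Lℓ), 1/L}. Then there exists a gradient descent orbit (xₖ), x_{k+1} = xₖ − h∇f(xₖ), with ‖xₖ − yₖ‖ ≤ ε for all 0 ≤ k ≤ K. -/
/-!
Write `δₖ` for the defect by which the sampled flow `yₖ = y(kh)` fails to be a gradient descent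
step; Taylor's theorem bounds it by `Lℓh²/2`. Then `xₖ = yₖ + eₖ` is a gradient descent orbit
iff `eₖ₊₁ = (I - hH) eₖ - δₖ`. In an eigenbasis of `H` the map `I - hH` is diagonal; it contracts by
`1 - hμ` on the directions with eigenvalue `≥ μ` and expands by at least `1 + hγ` on those with
eigenvalue `≤ -γ`. Solving the recurrence forward from `0` on the former and backward from
`e_K = 0` on the latter keeps `‖eₖ‖ ≤ δ/(hμ) + δ/(hγ)`, which the step-size condition makes `≤ ε`.
-/

open Set

theorem Nat.exists_seq_of_backward_step {α : Type*} (x : α) :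
    ∀ (K : ℕ) (g : ℕ → α → α), ∃ c : ℕ → α, c K = x ∧ ∀ k < K, c k = g k (c (k + 1))
  | 0, _ => ⟨fun _ => x, rfl, by simp⟩
  | K + 1, g => by
    obtain ⟨c, hcK, hc⟩ := exists_seq_of_backward_step x K (fun k => g (k + 1))
    refine ⟨fun k => Nat.casesOn k (g 0 (c 0)) c, hcK, ?_⟩
    rintro (_ | k) hk
    exacts [rfl, hc k (by omega)]

namespace EuclideanSpace

variable {ι : Type*} [Fintype ι]

theorem norm_toLp_mul_le {f : ι → ℝ} {C : ℝ} (hC : 0 ≤ C) (hf : ∀ i, |f i| ≤ C)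
    (v : EuclideanSpace ℝ ι) :
    ‖(WithLp.toLp 2 (fun i => f i * v i) : EuclideanSpace ℝ ι)‖ ≤ C * ‖v‖ := by
  rw [← sq_le_sq₀ (norm_nonneg _) (by positivity), mul_pow, EuclideanSpace.norm_sq_eq,
    EuclideanSpace.norm_sq_eq, Finset.mul_sum]
  gcongr with i
  rw [PiLp.toLp_apply, norm_mul, mul_pow]
  gcongr
  exact (Real.norm_eq_abs _).trans_le (hf i)

theorem exists_forward_shadow {a : ι → ℝ} {p : ι → Prop} {ρ D : ℝ} (hρ : ρ < 1) (hD : 0 ≤ D)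
    (ha : ∀ i, p i → |a i| ≤ ρ) {K : ℕ} (w : ℕ → EuclideanSpace ℝ ι)
    (hw : ∀ k < K, ‖w k‖ ≤ D) :
    ∃ c : ℕ → EuclideanSpace ℝ ι, (∀ k i, ¬ p i → c k i = 0) ∧
      (∀ k i, p i → c (k + 1) i = a i * c k i - w k i) ∧ ∀ k ≤ K, ‖c k‖ ≤ D / (1 - ρ) := by
  classical
  let step (k : ℕ) (v : EuclideanSpace ℝ ι) : EuclideanSpace ℝ ι :=
    WithLp.toLp 2 (fun i => if p i then a i * v i - w k i else 0)
  let c (k : ℕ) : EuclideanSpace ℝ ι := Nat.rec 0 step k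
  have hc : ∀ k, c (k + 1) = step k (c k) := fun _ => rfl
  have hmask : ∀ k i, ¬ p i → c k i = 0 := by
    rintro (_ | k) i hi
    · rfl
    · simp [hc, step, hi]
  refine ⟨c, hmask, fun k i hi => by simp [hc, step, hi], ?_⟩
  have hB : 0 ≤ D / (1 - ρ) := div_nonneg hD (by linarith)
  rcases lt_or_ge ρ 0 with hρ0 | hρ0
  · have hzero : ∀ k, c k = 0 := fun k => by
      ext i
      exact hmask k i fun hi => ((abs_nonneg _).trans (ha i hi)).not_gt hρ0
    intro k _
    simpa [hzero k] using hB
  have hstep : ∀ k v, ‖step k v‖ ≤ ρ * ‖v‖ + ‖w k‖ := by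
    intro k v
    have hsplit : step k v = WithLp.toLp 2 (fun i => (if p i then a i else 0) * v i) -
        WithLp.toLp 2 (fun i => (if p i then 1 else 0) * w k i) := by
      ext i
      by_cases hi : p i <;> simp [step, hi]
    rw [hsplit]
    refine (norm_sub_le _ _).trans (add_le_add (norm_toLp_mul_le hρ0 (fun i => ?_) v)
      ((norm_toLp_mul_le zero_le_one (fun i => ?_) _).trans_eq (one_mul _)))
    · split_ifs with hi
      exacts [ha i hi, by simpa using hρ0]
    · split_ifs <;> simp
  intro k
  induction k with
  | zero => intro; simpa [show c 0 = 0 from rfl] using hB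
  | succ k ih =>
    intro hk
    calc ‖c (k + 1)‖ ≤ ρ * ‖c k‖ + ‖w k‖ := hstep k (c k)
      _ ≤ ρ * (D / (1 - ρ)) + D := by gcongr; exacts [ih (by omega), hw k (by omega)]
      _ = D / (1 - ρ) := by field_simp [(by linarith : 1 - ρ ≠ 0)]; ring

theorem exists_backward_shadow {a : ι → ℝ} {p : ι → Prop} {β D : ℝ} (hβ : 1 < β) (hD : 0 ≤ D)
    (ha : ∀ i, ¬ p i → β ≤ |a i|) {K : ℕ} (w : ℕ → EuclideanSpace ℝ ι)
    (hw : ∀ k < K, ‖w k‖ ≤ D) :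
    ∃ c : ℕ → EuclideanSpace ℝ ι, (∀ k ≤ K, ∀ i, p i → c k i = 0) ∧
      (∀ k < K, ∀ i, ¬ p i → a i * c k i = c (k + 1) i + w k i) ∧
      ∀ k ≤ K, ‖c k‖ ≤ D / (β - 1) := by
  classical
  let step (k : ℕ) (v : EuclideanSpace ℝ ι) : EuclideanSpace ℝ ι :=
    WithLp.toLp 2 (fun i => (if p i then 0 else (a i)⁻¹) * (v + w k) i)
  obtain ⟨c, hcK, hc⟩ := Nat.exists_seq_of_backward_step 0 K step
  have hmask : ∀ k ≤ K, ∀ i, p i → c k i = 0 := by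
    intro k hk i hi
    rcases hk.lt_or_eq with hk | rfl
    · simp [hc k hk, step, hi]
    · simp [hcK]
  refine ⟨c, hmask, fun k hk i hi => ?_, ?_⟩
  · have ha0 : a i ≠ 0 := fun h0 => by linarith [ha i hi, abs_eq_zero.2 h0]
    rw [hc k hk]
    simp [step, hi, ha0]
  have hstep : ∀ k v, ‖step k v‖ ≤ β⁻¹ * (‖v‖ + ‖w k‖) := by
    intro k v
    refine (norm_toLp_mul_le (C := β⁻¹) (by positivity) (fun i => ?_) _).trans ?_
    · split_ifs with hi
      · simp only [abs_zero, inv_nonneg]; positivity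
      · rw [abs_inv]; exact inv_anti₀ (by linarith) (ha i hi)
    · gcongr; exact norm_add_le _ _
  have hB : 0 ≤ D / (β - 1) := div_nonneg hD (by linarith)
  intro k hk
  refine Nat.decreasingInduction (motive := fun k _ => ‖c k‖ ≤ D / (β - 1))
    (fun k hk ih => ?_) (by simpa [hcK] using hB) hk
  calc ‖c k‖ = ‖step k (c (k + 1))‖ := by rw [← hc k hk]
    _ ≤ β⁻¹ * (‖c (k + 1)‖ + ‖w k‖) := hstep _ _
    _ ≤ β⁻¹ * (D / (β - 1) + D) := by gcongr; exact hw k hk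
    _ = D / (β - 1) := by field_simp [(by linarith : β - 1 ≠ 0)]; ring

theorem exists_hyperbolic_shadow {a : ι → ℝ} {ρ β D : ℝ} (hρ : ρ < 1) (hβ : 1 < β) (hD : 0 ≤ D)
    (ha : ∀ i, |a i| ≤ ρ ∨ β ≤ |a i|) {K : ℕ} (w : ℕ → EuclideanSpace ℝ ι)
    (hw : ∀ k < K, ‖w k‖ ≤ D) :
    ∃ c : ℕ → EuclideanSpace ℝ ι,
      (∀ k < K, c (k + 1) = WithLp.toLp 2 (fun i => a i * c k i) - w k) ∧
      ∀ k ≤ K, ‖c k‖ ≤ D / (1 - ρ) + D / (β - 1) := by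
  obtain ⟨cs, hcs_mask, hcs, hcs_le⟩ :=
    exists_forward_shadow (p := fun i => |a i| ≤ ρ) hρ hD (fun _ => id) w hw
  obtain ⟨cu, hcu_mask, hcu, hcu_le⟩ :=
    exists_backward_shadow (p := fun i => |a i| ≤ ρ) hβ hD (fun i => (ha i).resolve_left) w hw
  refine ⟨cs + cu, fun k hk => ?_, fun k hk =>
    (norm_add_le _ _).trans (add_le_add (hcs_le k hk) (hcu_le k hk))⟩
  ext i
  simp only [Pi.add_apply, PiLp.add_apply, PiLp.sub_apply]
  by_cases hi : |a i| ≤ ρ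
  · rw [hcs k i hi, hcu_mask k hk.le i hi, hcu_mask (k + 1) hk i hi]
    ring
  · rw [hcs_mask k i hi, hcs_mask (k + 1) i hi]
    linear_combination -hcu k hk i hi

end EuclideanSpace

theorem exists_shadow_of_spectral_gap {E : Type*} [NormedAddCommGroup E] [InnerProductSpace ℝ E]
    [FiniteDimensional ℝ E] {H : E →L[ℝ] E} (hH : IsSelfAdjoint H) {μ γ h D : ℝ} (hμ : 0 < μ)
    (hγ : 0 < γ) (hh : 0 < h) (hhH : h * ‖H‖ ≤ 1)
    (hgap : ∀ lam ∈ spectrum ℝ H, lam ≤ -γ ∨ μ ≤ lam) (hD : 0 ≤ D) {K : ℕ} (δ : ℕ → E)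
    (hδ : ∀ k < K, ‖δ k‖ ≤ D) :
    ∃ e : ℕ → E, (∀ k < K, e (k + 1) = e k - h • H (e k) - δ k) ∧
      ∀ k ≤ K, ‖e k‖ ≤ D / (h * μ) + D / (h * γ) := by
  have hT := hH.isSymmetric
  set lam := hT.eigenvalues rfl
  set V := (hT.eigenvectorBasis rfl).repr
  have hV : ∀ v i, V (H v) i = lam i * V v i := hT.eigenvectorBasis_apply_self_apply rfl
  have hlam_mem : ∀ i, lam i ∈ spectrum ℝ H := fun i => by
    rw [ContinuousLinearMap.spectrum_eq]
    exact (hT.hasEigenvalue_eigenvalues rfl i).mem_spectrum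
  have hlam_le : ∀ i, lam i ≤ ‖H‖ := fun i => by
    have : Nontrivial E := Module.nontrivial_of_finrank_pos i.pos
    exact (le_abs_self _).trans (spectrum.norm_le_norm_of_mem (hlam_mem i))
  have ha : ∀ i, |1 - h * lam i| ≤ 1 - h * μ ∨ 1 + h * γ ≤ |1 - h * lam i| := by
    intro i
    rcases hgap _ (hlam_mem i) with hneg | hpos
    · right; rw [abs_of_pos (by nlinarith)]; nlinarith
    · left; rw [abs_of_nonneg (by nlinarith [hlam_le i])]; nlinarith
  obtain ⟨c, hc, hc_le⟩ := EuclideanSpace.exists_hyperbolic_shadow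
    (by nlinarith : 1 - h * μ < 1) (by nlinarith : 1 < 1 + h * γ) hD ha (fun k => V (δ k))
    (fun k hk => (V.norm_map _).trans_le (hδ k hk))
  refine ⟨fun k => V.symm (c k), fun k hk => V.injective ?_, fun k hk => ?_⟩
  · ext i
    simp only [hc k hk, map_sub, LinearIsometryEquiv.apply_symm_apply, PiLp.sub_apply, map_smul,
      PiLp.smul_apply, hV, smul_eq_mul]
    ring
  · rw [V.symm.norm_map]
    convert hc_le k hk using 3 <;> ring

theorem norm_flow_sub_euler_step_le {E : Type*} [NormedAddCommGroup E] [NormedSpace ℝ E]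
    {H : E →L[ℝ] E} {xstar : E} {y : ℝ → E} {ℓ a h : ℝ}
    (hy : ∀ t, HasDerivAt y (-(H (y t - xstar))) t) (hh : 0 ≤ h)
    (hℓ : ∀ t ∈ Icc a (a + h), ‖H (y t - xstar)‖ ≤ ℓ) :
    ‖y (a + h) - y a + h • H (y a - xstar)‖ ≤ ‖H‖ * ℓ * h ^ 2 / 2 := by
  have hlip : ∀ t ∈ Icc a (a + h), ‖y t - y a‖ ≤ ℓ * (t - a) :=
    norm_image_sub_le_of_norm_deriv_le_segment' (fun t _ => (hy t).hasDerivWithinAt)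
      fun t ht => by rw [norm_neg]; exact hℓ t (Ico_subset_Icc_self ht)
  -- `g` is the defect of the Euler step taken from `a` up to time `t`.
  let g t := y t - y a + (t - a) • H (y a - xstar)
  have hg : ∀ t, HasDerivAt g (H (y a - y t)) t := fun t => by
    refine (((hy t).sub_const (y a)).add (((hasDerivAt_id t).sub_const a).smul_const
      (H (y a - xstar)))).congr_deriv ?_
    rw [one_smul, ← map_neg, ← map_add]
    congr 1
    abel
  have hB : ∀ t, HasDerivAt (fun t => ‖H‖ * ℓ / 2 * (t - a) ^ 2) (‖H‖ * ℓ * (t - a)) t :=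
    fun t => by
      refine ((((hasDerivAt_id t).sub_const a).pow 2).const_mul (‖H‖ * ℓ / 2)).congr_deriv ?_
      simp only [Nat.cast_ofNat, Nat.add_one_sub_one, pow_one, mul_one, id]
      ring
  have key := image_norm_le_of_norm_deriv_right_le_deriv_boundary (a := a) (b := a + h)
    (fun t _ => (hg t).continuousAt.continuousWithinAt) (fun t _ => (hg t).hasDerivWithinAt)
    (by simp [g]) hB fun t ht => by
      calc ‖H (y a - y t)‖ ≤ ‖H‖ * ‖y t - y a‖ := by rw [norm_sub_rev]; exact H.le_opNorm _
        _ ≤ ‖H‖ * (ℓ * (t - a)) := by gcongr; exact hlip t (Ico_subset_Icc_self ht)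
        _ = ‖H‖ * ℓ * (t - a) := by ring
  calc ‖y (a + h) - y a + h • H (y a - xstar)‖ = ‖g (a + h)‖ := by simp [g]
    _ ≤ ‖H‖ * ℓ / 2 * (a + h - a) ^ 2 := key (right_mem_Icc.2 (by linarith))
    _ = ‖H‖ * ℓ * h ^ 2 / 2 := by ring

theorem iterate_gradient_step_eq_add {E : Type*} [NormedAddCommGroup E] [NormedSpace ℝ E]
    (H : E →L[ℝ] E) (xstar : E) (h : ℝ) {z e : ℕ → E} {K : ℕ}
    (he : ∀ k < K, e (k + 1) = e k - h • H (e k) - (z (k + 1) - z k + h • H (z k - xstar))) :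
    ∀ k ≤ K, (fun v => v - h • H (v - xstar))^[k] (z 0 + e 0) = z k + e k := by
  intro k hk
  induction k with
  | zero => rfl
  | succ k ih =>
    rw [Function.iterate_succ_apply', ih (by omega), he k (by omega),
      show z k + e k - xstar = (z k - xstar) + e k by abel, map_add, smul_add]
    abel

/-- Shadowing for gradient descent on a hyperbolic quadratic saddle: if the symmetric
Hessian H has no eigenvalue in (−γ, μ) and the gradient flow has gradients bounded by
ℓ up to iteration K, then for 0 < h ≤ min{με/(Lℓ), γε/(2Lℓ), 1/L} there is a gradient
descent orbit ε-shadowing the sampled flow up to iteration K. -/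
theorem gradient_descent_shadowing_quadratic_saddle {d : ℕ}
    (H : EuclideanSpace ℝ (Fin d) →L[ℝ] EuclideanSpace ℝ (Fin d))
    (hsa : IsSelfAdjoint H) (xstar : EuclideanSpace ℝ (Fin d))
    (μ γ L ℓ ε h : ℝ) (hμ : 0 < μ) (hγ : 0 < γ) (hε : 0 < ε) (hℓpos : 0 < ℓ)
    (hLpos : 0 < L) (hHL : ‖H‖ ≤ L)
    (hgap : ∀ lam ∈ spectrum ℝ H, lam ≤ -γ ∨ μ ≤ lam)
    (y : ℝ → EuclideanSpace ℝ (Fin d))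
    (hflow : ∀ t : ℝ, HasDerivAt y (-(H (y t - xstar))) t)
    (K : ℕ)
    (hℓ : ∀ t : ℝ, 0 ≤ t → t ≤ (K : ℝ) * h → ‖H (y t - xstar)‖ ≤ ℓ)
    (hh : 0 < h)
    (hhbound : h ≤ min (μ * ε / (L * ℓ)) (min (γ * ε / (2 * L * ℓ)) (1 / L))) :
    ∃ x : ℕ → EuclideanSpace ℝ (Fin d),
      (∀ k : ℕ, x (k + 1) = x k - h • H (x k - xstar)) ∧
      ∀ k : ℕ, k ≤ K → ‖x k - y ((k : ℝ) * h)‖ ≤ ε := by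
  simp only [le_min_iff, le_div_iff₀ (by positivity : 0 < L * ℓ),
    le_div_iff₀ (by positivity : 0 < 2 * L * ℓ), le_div_iff₀ hLpos] at hhbound
  obtain ⟨hμε, hγε, hhL⟩ := hhbound
  set z : ℕ → EuclideanSpace ℝ (Fin d) := fun k => y (k * h)
  have hdefect : ∀ k < K, ‖z (k + 1) - z k + h • H (z k - xstar)‖ ≤ L * ℓ * h ^ 2 / 2 := by
    intro k hk
    have hk' : (k : ℝ) + 1 ≤ K := by exact_mod_cast hk
    have hstep := norm_flow_sub_euler_step_le hflow hh.le (a := k * h) (ℓ := ℓ) fun t ht =>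
      hℓ t ((mul_nonneg k.cast_nonneg hh.le).trans ht.1) (by nlinarith [ht.2])
    simp only [z, Nat.cast_succ, add_mul, one_mul]
    exact hstep.trans (by gcongr)
  obtain ⟨e, he, he_le⟩ := exists_shadow_of_spectral_gap hsa hμ hγ hh
    (by nlinarith [norm_nonneg H]) hgap (by positivity) _ hdefect
  refine ⟨fun k => (fun v => v - h • H (v - xstar))^[k] (z 0 + e 0),
    fun k => Function.iterate_succ_apply' _ _ _, fun k hk => ?_⟩
  show ‖(fun v => v - h • H (v - xstar))^[k] (z 0 + e 0) - z k‖ ≤ ε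
  rw [iterate_gradient_step_eq_add H xstar h he k hk, add_sub_cancel_left]
  have hstable : L * ℓ * h ^ 2 / 2 / (h * μ) ≤ ε / 2 := by
    rw [div_le_iff₀ (by positivity)]; nlinarith [mul_le_mul_of_nonneg_left hμε hh.le]
  have hunstable : L * ℓ * h ^ 2 / 2 / (h * γ) ≤ ε / 2 := by
    rw [div_le_iff₀ (by positivity)]
    nlinarith [mul_le_mul_of_nonneg_left hγε hh.le, mul_pos (mul_pos hh hγ) hε]
  linarith [he_le k hk]
end
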